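/- Let F₁,…,Fₙ be smooth vector fields on ℝᵐ with smooth flows Φ₁,…,Φₙ : ℝᵐ × ℝ → ℝᵐ (so Φᵢ(x,0) = x and ∂Φᵢ/∂t(x,t) = Fᵢ(Φᵢ(x,t)) for all x, t), and let α₁,…,αₙ : ℝᵐ → ℝ be smooth functions with αᵢ(0) = 0 for all i. Define the shift map f : ℝᵐ → ℝᵐ by f(x) = Φₙ(⋯Φ₂(Φ₁(x,α₁(x)),α₂(x))⋯,αₙ(x)). Then f(0) = 0, the total derivative of f at 0 is Df(0) = I_m + Σ_{i=1}^{n} Fᵢ(0)·(∇αᵢ(0))ᵀ (the linear map v ↦ v + Σᵢ ⟨∇αᵢ(0), v⟩ Fᵢ(0)), and consequently the Jacobian determinant of f at 0 equals det(I_n + Y) where Y is the n×n matrix with (i,j)-entry ⟨F_j(0), ∇αᵢ(0)⟩. -/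

import Mathlib

open ContinuousLinearMap

private lemma euclid_sum_apply {m : ℕ} {ι : Type*} (s : Finset ι)
    (v : ι → EuclideanSpace ℝ (Fin m)) (r : Fin m) :
    (∑ i ∈ s, v i) r = ∑ i ∈ s, v i r := by
  classical
  induction s using Finset.cons_induction with
  | empty =>
    show (0 : EuclideanSpace ℝ (Fin m)) r = 0
    rfl
  | cons a s ha ih => rw [Finset.sum_cons, Finset.sum_cons, PiLp.add_apply, ih]

/-- The shift map along the flows `Φ₁, …, Φₙ` via the shift functions `α₁, …, αₙ`:
`x ↦ Φₙ(⋯Φ₂(Φ₁(x, α₁ x), α₂ x)⋯, αₙ x)`, each `αᵢ` being evaluated at the initial point. -/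
def shiftMap {m n : ℕ}
    (Φ : Fin n → EuclideanSpace ℝ (Fin m) × ℝ → EuclideanSpace ℝ (Fin m))
    (α : Fin n → EuclideanSpace ℝ (Fin m) → ℝ)
    (x : EuclideanSpace ℝ (Fin m)) : EuclideanSpace ℝ (Fin m) :=
  (List.finRange n).foldl (fun y i => Φ i (y, α i x)) x

/-- If `Φ₁, …, Φₙ` are the smooth flows of smooth vector fields `F₁, …, Fₙ` on `ℝᵐ` and
`α₁, …, αₙ : ℝᵐ → ℝ` are smooth with `αᵢ(0) = 0`, then the shift map
`f x = Φₙ(⋯Φ₁(x, α₁ x)⋯, αₙ x)` satisfies `f 0 = 0`, its derivative at `0` is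
`Df(0) = I + Σᵢ Fᵢ(0)·(∇αᵢ(0))ᵀ`, and its Jacobian determinant at `0` equals
`det (I_n + Y)` where `Y i j = ⟨F_j(0), ∇αᵢ(0)⟩`. -/
theorem shift_jacobian_at_zero (m n : ℕ)
    (F : Fin n → EuclideanSpace ℝ (Fin m) → EuclideanSpace ℝ (Fin m))
    (Φ : Fin n → EuclideanSpace ℝ (Fin m) × ℝ → EuclideanSpace ℝ (Fin m))
    (α : Fin n → EuclideanSpace ℝ (Fin m) → ℝ)
    (hΦ : ∀ i, ContDiff ℝ (⊤ : ℕ∞) (Φ i)) (hF : ∀ i, ContDiff ℝ (⊤ : ℕ∞) (F i))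
    (hα : ∀ i, ContDiff ℝ (⊤ : ℕ∞) (α i))
    (hΦ0 : ∀ i x, Φ i (x, 0) = x)
    (hΦt : ∀ i x t, HasDerivAt (fun s => Φ i (x, s)) (F i (Φ i (x, t))) t)
    (hα0 : ∀ i, α i 0 = 0)
    (f : EuclideanSpace ℝ (Fin m) → EuclideanSpace ℝ (Fin m))
    (hf : f = shiftMap Φ α) :
    f 0 = 0
    ∧ fderiv ℝ f 0 =
        ContinuousLinearMap.id ℝ (EuclideanSpace ℝ (Fin m))
          + ∑ i, (innerSL ℝ (gradient (α i) 0)).smulRight (F i 0)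
    ∧ LinearMap.det
        (fderiv ℝ f 0 : EuclideanSpace ℝ (Fin m) →ₗ[ℝ] EuclideanSpace ℝ (Fin m)) =
      ((1 : Matrix (Fin n) (Fin n) ℝ)
        + Matrix.of fun i j => (inner ℝ (F j 0) (gradient (α i) 0) : ℝ)).det := by
  classical
  set rk : Fin n → EuclideanSpace ℝ (Fin m) →L[ℝ] EuclideanSpace ℝ (Fin m) :=
    fun i => (innerSL ℝ (gradient (α i) 0)).smulRight (F i 0) with hrk
  -- derivative of each flow at (0,0)
  have hΦd : ∀ i : Fin n, HasFDerivAt (Φ i)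
      (ContinuousLinearMap.fst ℝ (EuclideanSpace ℝ (Fin m)) ℝ
        + (ContinuousLinearMap.snd ℝ (EuclideanSpace ℝ (Fin m)) ℝ).smulRight (F i 0)) (0, 0) := by
    intro i
    have hdiff : DifferentiableAt ℝ (Φ i) ((0 : EuclideanSpace ℝ (Fin m)), (0 : ℝ)) :=
      ((hΦ i).differentiable (by simp)).differentiableAt
    have hD := hdiff.hasFDerivAt
    set D := fderiv ℝ (Φ i) ((0 : EuclideanSpace ℝ (Fin m)), (0 : ℝ)) with hDdef
    have h1 : D.comp (ContinuousLinearMap.inl ℝ (EuclideanSpace ℝ (Fin m)) ℝ)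
        = ContinuousLinearMap.id ℝ (EuclideanSpace ℝ (Fin m)) := by
      have hinl : HasFDerivAt (fun x : EuclideanSpace ℝ (Fin m) => (x, (0 : ℝ)))
          (ContinuousLinearMap.inl ℝ (EuclideanSpace ℝ (Fin m)) ℝ) 0 :=
        (ContinuousLinearMap.inl ℝ (EuclideanSpace ℝ (Fin m)) ℝ).hasFDerivAt
      have hc := hD.comp (0 : EuclideanSpace ℝ (Fin m)) hinl
      have hc' : HasFDerivAt (fun x : EuclideanSpace ℝ (Fin m) => x)
          (D.comp (ContinuousLinearMap.inl ℝ (EuclideanSpace ℝ (Fin m)) ℝ)) 0 := by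
        have hfun : (Φ i ∘ fun x : EuclideanSpace ℝ (Fin m) => (x, (0 : ℝ)))
            = fun x : EuclideanSpace ℝ (Fin m) => x := by
          funext x; simp [Function.comp, hΦ0 i]
        rw [← hfun]; exact hc
      exact hc'.unique (hasFDerivAt_id 0)
    have h2 : D.comp (ContinuousLinearMap.inr ℝ (EuclideanSpace ℝ (Fin m)) ℝ)
        = (1 : ℝ →L[ℝ] ℝ).smulRight (F i 0) := by
      have hinr : HasFDerivAt (fun s : ℝ => ((0 : EuclideanSpace ℝ (Fin m)), s))
          (ContinuousLinearMap.inr ℝ (EuclideanSpace ℝ (Fin m)) ℝ) 0 :=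
        (ContinuousLinearMap.inr ℝ (EuclideanSpace ℝ (Fin m)) ℝ).hasFDerivAt
      have hc := hD.comp (0 : ℝ) hinr
      have ht : HasFDerivAt (fun s : ℝ => Φ i (0, s))
          ((1 : ℝ →L[ℝ] ℝ).smulRight (F i 0)) 0 := by
        have h := (hΦt i 0 0).hasFDerivAt
        have e : (1 : ℝ →L[ℝ] ℝ).smulRight (F i 0) = toSpanSingleton ℝ (F i 0) := by
          ext; simp
        rw [e]
        simpa only [hΦ0 i] using h
      exact hc.unique ht
    have hDeq : D = ContinuousLinearMap.fst ℝ (EuclideanSpace ℝ (Fin m)) ℝ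
        + (ContinuousLinearMap.snd ℝ (EuclideanSpace ℝ (Fin m)) ℝ).smulRight (F i 0) := by
      refine ContinuousLinearMap.ext fun vt => ?_
      obtain ⟨v, t⟩ := vt
      have e1 : D (v, 0) = v := by
        have h := ContinuousLinearMap.ext_iff.mp h1 v
        simpa using h
      have e2 : D (0, t) = t • F i 0 := by
        have h := ContinuousLinearMap.ext_iff.mp h2 t
        simpa using h
      have hsplit : ((v, t) : EuclideanSpace ℝ (Fin m) × ℝ) = (v, 0) + (0, t) := by simp
      rw [hsplit, map_add, e1, e2]
      simp
    rw [← hDeq]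
    exact hD
  -- the main induction on the list of flows
  have key : ∀ l : List (Fin n),
      List.foldl (fun y i => Φ i (y, α i (0 : EuclideanSpace ℝ (Fin m)))) 0 l = 0 ∧
      HasFDerivAt (fun x : EuclideanSpace ℝ (Fin m) =>
          List.foldl (fun y i => Φ i (y, α i x)) x l)
        (ContinuousLinearMap.id ℝ (EuclideanSpace ℝ (Fin m)) + (l.map rk).sum) 0 := by
    intro l
    induction l using List.reverseRecOn with
    | nil =>
      refine ⟨rfl, ?_⟩
      simp
      exact hasFDerivAt_id (0 : EuclideanSpace ℝ (Fin m))
    | append_singleton l j ih =>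
      obtain ⟨h0, hDp⟩ := ih
      have hga : HasFDerivAt (α j) (innerSL ℝ (gradient (α j) 0)) 0 := by
        have h1 : HasGradientAt (α j) (gradient (α j) 0) 0 :=
          (((hα j).differentiable (by simp)) 0).hasGradientAt
        have h2 := hasGradientAt_iff_hasFDerivAt.mp h1
        have h3 : ((InnerProductSpace.toDual ℝ (EuclideanSpace ℝ (Fin m))) (gradient (α j) 0)
            : EuclideanSpace ℝ (Fin m) →L[ℝ] ℝ) = innerSL ℝ (gradient (α j) 0) := by
          refine ContinuousLinearMap.ext fun v => ?_
          simp [InnerProductSpace.toDual_apply_apply]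
        rw [← h3]
        exact h2
      have hpair : HasFDerivAt
          (fun x : EuclideanSpace ℝ (Fin m) =>
            ((List.foldl (fun y i => Φ i (y, α i x)) x l : EuclideanSpace ℝ (Fin m)), α j x))
          ((ContinuousLinearMap.id ℝ (EuclideanSpace ℝ (Fin m)) + (l.map rk).sum).prod
            (innerSL ℝ (gradient (α j) 0))) 0 := hDp.prodMk hga
      have hΦd' : HasFDerivAt (Φ j)
          (ContinuousLinearMap.fst ℝ (EuclideanSpace ℝ (Fin m)) ℝ
            + (ContinuousLinearMap.snd ℝ (EuclideanSpace ℝ (Fin m)) ℝ).smulRight (F j 0))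
          ((List.foldl (fun y i => Φ i (y, α i (0 : EuclideanSpace ℝ (Fin m)))) 0 l
            : EuclideanSpace ℝ (Fin m)), α j 0) := by
        rw [h0, hα0 j]
        exact hΦd j
      have hcomp := hΦd'.comp 0 hpair
      constructor
      · rw [List.foldl_append]
        simp only [List.foldl_cons, List.foldl_nil]
        rw [h0, hα0 j, hΦ0 j]
      · have hfun : (fun x : EuclideanSpace ℝ (Fin m) =>
              List.foldl (fun y i => Φ i (y, α i x)) x (l ++ [j]))
            = Φ j ∘ (fun x : EuclideanSpace ℝ (Fin m) =>
              ((List.foldl (fun y i => Φ i (y, α i x)) x l : EuclideanSpace ℝ (Fin m)), α j x)) := by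
          funext x
          simp [List.foldl_append, Function.comp]
        rw [hfun]
        have hder :
            (ContinuousLinearMap.fst ℝ (EuclideanSpace ℝ (Fin m)) ℝ
              + (ContinuousLinearMap.snd ℝ (EuclideanSpace ℝ (Fin m)) ℝ).smulRight (F j 0)).comp
              ((ContinuousLinearMap.id ℝ (EuclideanSpace ℝ (Fin m)) + (l.map rk).sum).prod
                (innerSL ℝ (gradient (α j) 0)))
            = ContinuousLinearMap.id ℝ (EuclideanSpace ℝ (Fin m)) + ((l ++ [j]).map rk).sum := by
          refine ContinuousLinearMap.ext fun v => ?_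
          simp [rk, add_assoc]
        rw [← hder]
        exact hcomp
  have hkey := key (List.finRange n)
  have hf0 : f 0 = 0 := by
    rw [hf]
    exact hkey.1
  have hDf : HasFDerivAt f (ContinuousLinearMap.id ℝ (EuclideanSpace ℝ (Fin m)) + ∑ i, rk i) 0 := by
    rw [hf, Fin.sum_univ_def]
    exact hkey.2
  have hfd : fderiv ℝ f 0
      = ContinuousLinearMap.id ℝ (EuclideanSpace ℝ (Fin m)) + ∑ i, rk i := hDf.fderiv
  refine ⟨hf0, hfd, ?_⟩
  -- determinant computation
  set b := (EuclideanSpace.basisFun (Fin m) ℝ).toBasis with hb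
  set A : Matrix (Fin m) (Fin n) ℝ := Matrix.of fun r i => F i 0 r with hA
  set B : Matrix (Fin n) (Fin m) ℝ := Matrix.of fun i k => gradient (α i) 0 k with hB
  have hM : LinearMap.toMatrix b b
      ((ContinuousLinearMap.id ℝ (EuclideanSpace ℝ (Fin m)) + ∑ i, rk i
        : EuclideanSpace ℝ (Fin m) →L[ℝ] EuclideanSpace ℝ (Fin m))
        : EuclideanSpace ℝ (Fin m) →ₗ[ℝ] EuclideanSpace ℝ (Fin m))
      = 1 + A * B := by
    ext r k
    have hbk : b k = EuclideanSpace.single k 1 := by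
      rw [hb, OrthonormalBasis.coe_toBasis, EuclideanSpace.basisFun_apply]
    rw [LinearMap.toMatrix_apply, hbk]
    have happ : ((ContinuousLinearMap.id ℝ (EuclideanSpace ℝ (Fin m)) + ∑ i, rk i
          : EuclideanSpace ℝ (Fin m) →L[ℝ] EuclideanSpace ℝ (Fin m))
          : EuclideanSpace ℝ (Fin m) →ₗ[ℝ] EuclideanSpace ℝ (Fin m))
        (EuclideanSpace.single k 1)
        = EuclideanSpace.single k 1 + ∑ i, (gradient (α i) 0 k) • F i 0 := by
      simp only [ContinuousLinearMap.coe_coe, ContinuousLinearMap.add_apply,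
        ContinuousLinearMap.coe_id', id_eq, ContinuousLinearMap.sum_apply]
      congr 1
      refine Finset.sum_congr rfl fun i _ => ?_
      simp only [rk, ContinuousLinearMap.smulRight_apply, innerSL_apply_apply]
      congr 1
      simp only [EuclideanSpace.inner_single_right]
      simp
    rw [happ, hb, OrthonormalBasis.coe_toBasis_repr_apply, EuclideanSpace.basisFun_repr]
    rw [Matrix.add_apply, Matrix.mul_apply, PiLp.add_apply, euclid_sum_apply]
    congr 1
    · rw [Matrix.one_apply, EuclideanSpace.single_apply]
    · refine Finset.sum_congr rfl fun i _ => ?_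
      simp [hA, hB, PiLp.smul_apply, mul_comm]
  rw [hfd, ← LinearMap.det_toMatrix b, hM, Matrix.det_one_add_mul_comm]
  congr 1
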